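/- (Treewidth Duality, easy direction) If a graph G contains a bramble of order at least k+1, then tw(G) ≥ k. -/

import Mathlib

open SimpleGraph

/-- A tree decomposition of a graph `G`. -/
structure TreeDecomp {V : Type} (G : SimpleGraph V) where
  ι : Type
  T : SimpleGraph ι
  conn : T.Connected
  acyclic : T.IsAcyclic
  bag : ι → Finset V
  cover : ∀ v : V, ∃ i, v ∈ bag i
  edge_cover : ∀ ⦃u v : V⦄, G.Adj u v → ∃ i, u ∈ bag i ∧ v ∈ bag i
  bag_conn : ∀ v : V, (T.induce {i | v ∈ bag i}).Connected

/-- The treewidth of `G`: minimum over tree decompositions of max bag size minus one. -/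
noncomputable def treewidth {V : Type} (G : SimpleGraph V) : ℕ :=
  sInf {k | ∃ D : TreeDecomp G, ∀ i, (D.bag i).card ≤ k + 1}

/-- `G` is a `k`-tree: there is a construction ordering starting from a `(k+1)`-clique,
each later vertex being adjacent exactly to a `k`-clique of earlier vertices. -/
def IsKTree {V : Type} (k : ℕ) (G : SimpleGraph V) : Prop :=
  ∃ (n : ℕ) (e : V ≃ Fin n), k + 1 ≤ n ∧
    (∀ i j : Fin n, i < j → (j : ℕ) < k + 1 → G.Adj (e.symm i) (e.symm j)) ∧
    ∀ j : Fin n, k + 1 ≤ (j : ℕ) →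
      ∃ C : Finset V, G.IsNClique k C ∧ (∀ x ∈ C, ((e x : ℕ) < (j : ℕ))) ∧
        ∀ i : Fin n, i < j → (G.Adj (e.symm i) (e.symm j) ↔ e.symm i ∈ C)

/-- `G` has four vertices inducing a 4-cycle. -/
def HasInducedC4 {V : Type} (G : SimpleGraph V) : Prop :=
  ∃ a b c d : V, a ≠ c ∧ b ≠ d ∧
    G.Adj a b ∧ G.Adj b c ∧ G.Adj c d ∧ G.Adj d a ∧ ¬ G.Adj a c ∧ ¬ G.Adj b d

/-- Two vertex sets touch in `G`: they intersect or an edge of `G` joins them. -/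
def Touch {V : Type} (G : SimpleGraph V) (A B : Set V) : Prop :=
  (A ∩ B).Nonempty ∨ ∃ a ∈ A, ∃ b ∈ B, G.Adj a b

/-- A bramble in `G`: a family of connected, pairwise touching vertex sets. -/
def IsBramble {V : Type} (G : SimpleGraph V) (𝓑 : Set (Set V)) : Prop :=
  (∀ A ∈ 𝓑, (G.induce A).Connected) ∧ ∀ A ∈ 𝓑, ∀ B ∈ 𝓑, Touch G A B

/-- `S` is a hitting set of the bramble `𝓑`. -/
def IsHittingSet {V : Type} (𝓑 : Set (Set V)) (S : Set V) : Prop :=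
  ∀ A ∈ 𝓑, (A ∩ S).Nonempty

/-- The split graph `Q_n^k`: a `k`-clique (the vertices `< k`) with `n - k` further
vertices adjacent exactly to the clique. -/
def QGraph (n k : ℕ) : SimpleGraph (Fin n) where
  Adj i j := i ≠ j ∧ ((i : ℕ) < k ∨ (j : ℕ) < k)
  symm := by constructor; intro i j h; exact ⟨h.1.symm, h.2.symm⟩
  loopless := by constructor; intro i h; exact h.1 rfl

/-!
If `A` is connected, the nodes of a tree decomposition whose bags meet `A` form a subtree, and
touching sets give intersecting subtrees. By the Helly property of subtrees of a tree, all the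
subtrees coming from a bramble share a node; its bag is a hitting set, hence has at least `k + 1`
vertices.
-/

namespace SimpleGraph

variable {ι : Type*} {T : SimpleGraph ι}

namespace IsAcyclic

lemma support_subset_of_isPath (hT : T.IsAcyclic) {S : Set ι} (hS : (T.induce S).Preconnected)
    {x y : ι} (hx : x ∈ S) (hy : y ∈ S) {p : T.Walk x y} (hp : p.IsPath) :
    {v | v ∈ p.support} ⊆ S := by
  classical
  obtain ⟨w⟩ := hS ⟨x, hx⟩ ⟨y, hy⟩
  have hw : ∀ v ∈ (w.map (Embedding.induce S).toHom).support, v ∈ S := by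
    intro v hv
    rw [Walk.support_map, List.mem_map] at hv
    obtain ⟨⟨v, hvS⟩, -, rfl⟩ := hv
    exact hvS
  have hpw : (⟨p, hp⟩ : T.Path x y) = (w.map (Embedding.induce S).toHom).toPath :=
    (hT.subsingleton_path x y).elim _ _
  rintro v hv
  exact hw v (Walk.support_toPath_subset_support _ (by rw [← hpw]; exact hv))

lemma induce_inter_connected (hT : T.IsAcyclic) {S P : Set ι} (hS : (T.induce S).Preconnected)
    (hP : (T.induce P).Preconnected) (hSP : (S ∩ P).Nonempty) :
    (T.induce (S ∩ P)).Connected := by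
  classical
  refine (connected_iff _).mpr ⟨?_, hSP.to_subtype⟩
  rintro ⟨x, hxS, hxP⟩ ⟨y, hyS, hyP⟩
  obtain ⟨w⟩ := (hS ⟨x, hxS⟩ ⟨y, hyS⟩).map (Embedding.induce S).toHom
  have hsub : ∀ v ∈ w.toPath.1.support, v ∈ S ∩ P := fun v hv =>
    ⟨support_subset_of_isPath hT hS hxS hyS w.toPath.2 hv,
      support_subset_of_isPath hT hP hxP hyP w.toPath.2 hv⟩
  exact (w.toPath.1.induce _ hsub).reachable

/-- The path from `b` to `z` enters `S` through `a`. -/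
lemma mem_of_adj_of_mem_of_notMem (hT : T.IsAcyclic) {S P : Set ι}
    (hS : (T.induce S).Preconnected) (hP : (T.induce P).Preconnected) {a b z : ι}
    (hab : T.Adj a b) (haS : a ∈ S) (hbS : b ∉ S) (hbP : b ∈ P) (hzS : z ∈ S) (hzP : z ∈ P) :
    a ∈ P := by
  classical
  obtain ⟨w⟩ := (hS ⟨a, haS⟩ ⟨z, hzS⟩).map (Embedding.induce S).toHom
  have hb : b ∉ w.toPath.1.support := fun hb =>
    hbS (support_subset_of_isPath hT hS haS hzS w.toPath.2 hb)
  exact support_subset_of_isPath hT hP hbP hzP (w.toPath.2.cons hb (h := hab.symm))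
    (by simp)

/-- For `x ∈ S₁ ∩ S₂ \ S₃` and `y ∈ S₁ ∩ S₃`, the path from `x` to `y` lies in `S₁` and in
`S₂ ∪ S₃`, and leaves `S₂ \ S₃` along an edge `ab`. If `b ∉ S₂`, then `b ∈ S₃`, and the subtree
`S₃`, which meets `S₂`, would contain `a`; so `b ∈ S₁ ∩ S₂ ∩ S₃`. -/
lemma inter_inter_nonempty (hT : T.IsAcyclic) {S₁ S₂ S₃ : Set ι}
    (h₁ : (T.induce S₁).Preconnected) (h₂ : (T.induce S₂).Preconnected)
    (h₃ : (T.induce S₃).Preconnected) (h₁₂ : (S₁ ∩ S₂).Nonempty) (h₁₃ : (S₁ ∩ S₃).Nonempty)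
    (h₂₃ : (S₂ ∩ S₃).Nonempty) :
    (S₁ ∩ S₂ ∩ S₃).Nonempty := by
  classical
  obtain ⟨x, hx₁, hx₂⟩ := h₁₂
  obtain ⟨y, hy₁, hy₃⟩ := h₁₃
  obtain ⟨z, hz₂, hz₃⟩ := h₂₃
  by_cases hx₃ : x ∈ S₃
  · exact ⟨x, ⟨hx₁, hx₂⟩, hx₃⟩
  obtain ⟨w⟩ := (h₁ ⟨x, hx₁⟩ ⟨y, hy₁⟩).map (Embedding.induce S₁).toHom
  have hp₁ := support_subset_of_isPath hT h₁ hx₁ hy₁ w.toPath.2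
  have hp₂₃ := support_subset_of_isPath hT
    (induce_union_connected h₂ h₃ ⟨z, hz₂, hz₃⟩).preconnected (Or.inl hx₂) (Or.inr hy₃)
    w.toPath.2
  obtain ⟨d, hd, ⟨ha₂, ha₃⟩, hb⟩ :=
    w.toPath.1.exists_boundary_dart (S₂ \ S₃) ⟨hx₂, hx₃⟩ fun h => h.2 hy₃
  have hbp := w.toPath.1.dart_snd_mem_support_of_mem_darts hd
  by_cases hb₂ : d.snd ∈ S₂
  · exact ⟨d.snd, ⟨hp₁ hbp, hb₂⟩, not_not.mp fun hb₃ => hb ⟨hb₂, hb₃⟩⟩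
  · exact (ha₃ (mem_of_adj_of_mem_of_notMem hT h₂ h₃ d.adj ha₂ hb₂
      ((hp₂₃ hbp).resolve_left hb₂) hz₂ hz₃)).elim

lemma inter_sInter_nonempty (hT : T.IsAcyclic) {F : Set (Set ι)} (hF : F.Finite)
    (hconn : ∀ P ∈ F, (T.induce P).Preconnected) (hpair : ∀ P ∈ F, ∀ Q ∈ F, (P ∩ Q).Nonempty)
    {S : Set ι} (hS : (T.induce S).Connected) (hSF : ∀ P ∈ F, (S ∩ P).Nonempty) :
    (S ∩ ⋂₀ F).Nonempty := by
  induction F, hF using Set.Finite.induction_on generalizing S with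
  | empty => simpa using Set.nonempty_coe_sort.mp hS.nonempty
  | @insert P F _ _ ih =>
    have hsub : F ⊆ insert P F := Set.subset_insert P F
    have hP := hconn P (F.mem_insert P)
    have hSP := hSF P (F.mem_insert P)
    have hSPF : (S ∩ P ∩ ⋂₀ F).Nonempty :=
      ih (fun Q hQ => hconn Q (hsub hQ)) (fun Q hQ R hR => hpair Q (hsub hQ) R (hsub hR))
        (induce_inter_connected hT hS.preconnected hP hSP)
        fun Q hQ => inter_inter_nonempty hT hS.preconnected hP (hconn Q (hsub hQ)) hSP
          (hSF Q (hsub hQ)) (hpair P (F.mem_insert P) Q (hsub hQ))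
    rwa [Set.sInter_insert, ← Set.inter_assoc]

theorem sInter_nonempty_of_pairwise (hT : T.IsAcyclic) {F : Set (Set ι)} (hF : F.Finite)
    (hne : F.Nonempty)
    (hconn : ∀ P ∈ F, (T.induce P).Preconnected) (hpair : ∀ P ∈ F, ∀ Q ∈ F, (P ∩ Q).Nonempty) :
    (⋂₀ F).Nonempty := by
  obtain ⟨P, hP⟩ := hne
  have hPconn : (T.induce P).Connected :=
    (connected_iff _).mpr ⟨hconn P hP, (Set.inter_self P ▸ hpair P hP P hP).to_subtype⟩
  exact (inter_sInter_nonempty hT hF hconn hpair hPconn fun Q hQ => hpair P hP Q hQ).mono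
    Set.inter_subset_right

end IsAcyclic

end SimpleGraph

namespace TreeDecomp

variable {V : Type} {G : SimpleGraph V} (D : TreeDecomp G)

def nodesMeeting (A : Set V) : Set D.ι := {i | ∃ v ∈ A, v ∈ D.bag i}

lemma reachable_of_mem_bag {A : Set V} {v : V} (hv : v ∈ A) {i j : D.ι} (hi : v ∈ D.bag i)
    (hj : v ∈ D.bag j) :
    (D.T.induce (D.nodesMeeting A)).Reachable ⟨i, v, hv, hi⟩ ⟨j, v, hv, hj⟩ :=
  have hsub : {k | v ∈ D.bag k} ⊆ D.nodesMeeting A := fun _ hk => ⟨v, hv, hk⟩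
  ((D.bag_conn v).preconnected ⟨i, hi⟩ ⟨j, hj⟩).map (D.T.induceHomOfLE hsub).toHom

lemma reachable_of_walk {A : Set V} {u v : A} (w : (G.induce A).Walk u v) {i j : D.ι}
    (hi : ↑u ∈ D.bag i) (hj : ↑v ∈ D.bag j) :
    (D.T.induce (D.nodesMeeting A)).Reachable ⟨i, u, u.2, hi⟩ ⟨j, v, v.2, hj⟩ := by
  induction w generalizing i with
  | nil => exact D.reachable_of_mem_bag (Subtype.property _) hi hj
  | cons huu' _ ih =>
    obtain ⟨m, hmu, hmu'⟩ := D.edge_cover huu'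
    exact (D.reachable_of_mem_bag (Subtype.property _) hi hmu).trans (ih hmu' hj)

lemma connected_induce_nodesMeeting {A : Set V} (hA : (G.induce A).Connected) :
    (D.T.induce (D.nodesMeeting A)).Connected := by
  refine (connected_iff _).mpr ⟨?_, ?_⟩
  · rintro ⟨i, u, hu, hi⟩ ⟨j, v, hv, hj⟩
    obtain ⟨w⟩ := hA ⟨u, hu⟩ ⟨v, hv⟩
    exact D.reachable_of_walk w hi hj
  · obtain ⟨⟨v, hv⟩⟩ := hA.nonempty
    obtain ⟨i, hi⟩ := D.cover v
    exact ⟨⟨i, v, hv, hi⟩⟩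

lemma nodesMeeting_inter_nonempty {A B : Set V} (h : Touch G A B) :
    (D.nodesMeeting A ∩ D.nodesMeeting B).Nonempty := by
  rcases h with ⟨v, hvA, hvB⟩ | ⟨a, ha, b, hb, hab⟩
  · obtain ⟨i, hi⟩ := D.cover v
    exact ⟨i, ⟨v, hvA, hi⟩, v, hvB, hi⟩
  · obtain ⟨i, hia, hib⟩ := D.edge_cover hab
    exact ⟨i, ⟨a, ha, hia⟩, b, hb, hib⟩

theorem exists_isHittingSet_bag {𝓑 : Set (Set V)} (hb : IsBramble G 𝓑) (hfin : 𝓑.Finite)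
    (hne : 𝓑.Nonempty) : ∃ i, IsHittingSet 𝓑 (D.bag i : Set V) := by
  obtain ⟨i, hi⟩ := IsAcyclic.sInter_nonempty_of_pairwise D.acyclic (hfin.image D.nodesMeeting)
    (hne.image _) (by
      rintro _ ⟨A, hA, rfl⟩
      exact (D.connected_induce_nodesMeeting (hb.1 A hA)).preconnected) (by
      rintro _ ⟨A, hA, rfl⟩ _ ⟨B, hB, rfl⟩
      exact D.nodesMeeting_inter_nonempty (hb.2 A hA B hB))
  exact ⟨i, fun A hA => hi _ ⟨A, hA, rfl⟩⟩

noncomputable def trivial (G : SimpleGraph V) [Fintype V] : TreeDecomp G where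
  ι := Unit
  T := ⊥
  conn := .of_subsingleton
  acyclic := isAcyclic_bot
  bag _ := Finset.univ
  cover v := ⟨(), Finset.mem_univ v⟩
  edge_cover u v _ := ⟨(), Finset.mem_univ u, Finset.mem_univ v⟩
  bag_conn v :=
    have : Nonempty {_i : Unit | v ∈ Finset.univ} := ⟨⟨(), Finset.mem_univ v⟩⟩
    .of_subsingleton

end TreeDecomp

lemma exists_treeDecomp_card_bag_le_treewidth {V : Type} (G : SimpleGraph V) [Finite V] :
    ∃ D : TreeDecomp G, ∀ i, (D.bag i).card ≤ treewidth G + 1 := by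
  have := Fintype.ofFinite V
  have hcard : Fintype.card V ∈ {k | ∃ D : TreeDecomp G, ∀ i, (D.bag i).card ≤ k + 1} :=
    ⟨TreeDecomp.trivial G, fun _ => Nat.le_succ _⟩
  exact Nat.sInf_mem ⟨_, hcard⟩

lemma IsBramble.isHittingSet_univ {V : Type} {G : SimpleGraph V} {𝓑 : Set (Set V)}
    (hb : IsBramble G 𝓑) : IsHittingSet 𝓑 Set.univ := fun A hA =>
  have ⟨⟨v, hv⟩⟩ := (hb.1 A hA).nonempty
  ⟨v, hv, trivial⟩

theorem treewidth_ge_of_bramble {V : Type} (G : SimpleGraph V) (k : ℕ) (𝓑 : Set (Set V))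
    (hb : IsBramble G 𝓑) (ho : ∀ S : Set V, IsHittingSet 𝓑 S → k + 1 ≤ S.ncard) :
    k ≤ treewidth G := by
  -- `ncard` of an infinite set is `0`, so the hitting set `univ` forces `V` to be finite.
  have : Finite V := by
    by_contra hV
    have := ho _ hb.isHittingSet_univ
    rw [Set.Infinite.ncard (Set.infinite_univ_iff.mpr (not_finite_iff_infinite.mp hV))] at this
    omega
  have hne : 𝓑.Nonempty := Set.nonempty_iff_ne_empty.mpr fun h => by
    simpa using ho ∅ (by simp [IsHittingSet, h])
  obtain ⟨D, hD⟩ := exists_treeDecomp_card_bag_le_treewidth G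
  obtain ⟨i, hi⟩ := D.exists_isHittingSet_bag hb (Set.toFinite 𝓑) hne
  have := ho _ hi
  rw [Set.ncard_coe_finset] at this
  linarith [hD i]
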